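/- arXiv:2102.11435 — 3 statements merged into one kernel-verified Lean document; each statement's English description precedes it below -/
import Mathlib

section
/- Consider the 2-level firefighter problem on a forest of stars: finite disjoint sets L₁ (roots) and L₂ (leaves), a parent function p : L₂ → L₁, weights w : L₂ → ℕ, and budgets k₁, k₂ ∈ ℕ. Suppose there exist nonnegative reals (y_v)_{v ∈ L₁ ∪ L₂} with ∑_{u∈L₁} y_u ≤ k₁ - 2, ∑_{v∈L₂} y_v ≤ k₂, y_{p(v)} + y_v ≤ 1 for all v ∈ L₂, and ∑_{v∈L₂} w(v)·(y_{p(v)} + y_v) ≥ m. Then there exist T₁ ⊆ L₁ and T₂ ⊆ L₂ with |T₁| ≤ k₁, |T₂| ≤ k₂, and ∑ { w(v) : v ∈ L₂, v ∈ T₂ or p(v) ∈ T₁ } ≥ m. -/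
open scoped Classical

/-!
Among the optimal LP solutions pick an extreme point `z` (Krein–Milman on the compact face of
maximizers), so that `z ± d` feasible forces `d = 0`. If three roots had `0 < z u < 1`, shifting
them by `μ u`, and each leaf with a tight capacity constraint below them by `-μ u`, keeps every
tight constraint tight; only the two budgets impose linear conditions on the three `μ u`, so a
nonzero feasible shift would exist. Hence at most two roots are fractional, and likewise at most one
leaf below a root of value `0`. Rounding every positive value up to `1` does not decrease the
covered weight, opens at most `(k₁ - 2) + 2` roots, and at most `k₂` leaves because the leaf
budget is an integer.
-/

open Finset Filter Topology

theorem IsCompact.exists_isMaxOn_eq_zero_of_add_mem_of_sub_mem {E : Type*} [AddCommGroup E]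
    [Module ℝ E] [TopologicalSpace E] [IsTopologicalAddGroup E] [ContinuousSMul ℝ E]
    [LocallyConvexSpace ℝ E] [T2Space E] {A : Set E} (hA : IsCompact A) (hne : A.Nonempty)
    (f : E →ₗ[ℝ] ℝ) (hf : Continuous f) :
    ∃ z ∈ A, IsMaxOn f A z ∧ ∀ d, z + d ∈ A → z - d ∈ A → d = 0 := by
  obtain ⟨z₀, hz₀, hmax₀⟩ := hA.exists_isMaxOn hne hf.continuousOn
  have hM : IsCompact (A ∩ {x | f z₀ ≤ f x}) := hA.inter_right (isClosed_le continuous_const hf)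
  obtain ⟨z, hz⟩ := hM.extremePoints_nonempty ⟨z₀, hz₀, le_refl (f z₀)⟩
  obtain ⟨⟨hzA, hz₀z⟩, hzext⟩ := mem_extremePoints.1 hz
  have hzmax : IsMaxOn f A z := isMaxOn_iff.2 fun x hx => (isMaxOn_iff.1 hmax₀ x hx).trans hz₀z
  refine ⟨z, hzA, hzmax, fun d hplus hminus => ?_⟩
  have hfd : f d = 0 := by
    have h₁ := isMaxOn_iff.1 hzmax _ hplus
    have h₂ := isMaxOn_iff.1 hzmax _ hminus
    rw [map_add] at h₁
    rw [map_sub] at h₂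
    linarith
  have hmid : z ∈ openSegment ℝ (z + d) (z - d) :=
    ⟨1 / 2, 1 / 2, by norm_num, by norm_num, by norm_num, by module⟩
  have := hzext (z + d) ⟨hplus, by simpa [hfd] using hz₀z⟩ (z - d)
    ⟨hminus, by simpa [hfd] using hz₀z⟩ hmid
  simpa using this.1

theorem Filter.Eventually.exists_pos_and_neg {Q : ℝ → Prop} (h : ∀ᶠ e in 𝓝 0, Q e) :
    ∃ ε > 0, Q ε ∧ Q (-ε) := by
  have hneg : ∀ᶠ e in 𝓝 (0 : ℝ), Q (-e) := (continuous_neg.tendsto' 0 0 neg_zero).eventually h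
  obtain ⟨ε, hQ, hε⟩ := (((h.and hneg).filter_mono nhdsWithin_le_nhds).and
    (self_mem_nhdsWithin : Set.Ioi (0 : ℝ) ∈ 𝓝[>] 0)).exists
  exact ⟨ε, hε, hQ⟩

theorem eventually_nonneg_add_mul {x c : ℝ} (hx : 0 ≤ x) (hc : x = 0 → c = 0) :
    ∀ᶠ e in 𝓝 (0 : ℝ), 0 ≤ x + e * c := by
  rcases hx.eq_or_lt with rfl | hx
  · simp [hc rfl]
  · have : Tendsto (fun e : ℝ => x + e * c) (𝓝 0) (𝓝 x) :=
      (by fun_prop : Continuous fun e : ℝ => x + e * c).tendsto' 0 x (by simp)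
    exact (this.eventually (lt_mem_nhds hx)).mono fun _ h => h.le

theorem exists_ne_zero_sum_smul_eq_zero {ι K M : Type*} [Fintype ι] [DivisionRing K]
    [AddCommGroup M] [Module K M] [Module.Finite K M] (v : ι → M) (s : Finset ι)
    (hs : Module.finrank K M < #s) :
    ∃ μ : ι → K, μ ≠ 0 ∧ (∀ i ∉ s, μ i = 0) ∧ ∑ i, μ i • v i = 0 := by
  have hdep : ¬LinearIndepOn K v (s : Set ι) := fun h => by
    have := h.fintype_card_le_finrank
    simp only [Finset.coe_sort_coe, Fintype.card_coe] at this
    omega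
  obtain ⟨f, hf, i, hi, hfi⟩ := not_linearIndepOn_finset_iff.1 hdep
  refine ⟨fun j => if j ∈ s then f j else 0, fun h => hfi (by simpa [hi] using congrFun h i),
    fun j hj => if_neg hj, ?_⟩
  simpa [ite_smul, Finset.sum_ite_mem] using hf

theorem card_pos_le_of_card_frac_le {ι : Type*} {s : Finset ι} {g : ι → ℝ} {n k : ℕ}
    (hn : 1 ≤ n) (hg : ∀ i ∈ s, 0 ≤ g i) (hfrac : #{i ∈ s | 0 < g i ∧ g i < 1} ≤ n)
    (hsum : ∑ i ∈ s, g i + n ≤ k + 1) : #{i ∈ s | 0 < g i} ≤ k := by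
  set F := {i ∈ s | 0 < g i ∧ g i < 1}
  set O := {i ∈ s | 1 ≤ g i}
  have hsupp : #{i ∈ s | 0 < g i} ≤ #F + #O := by
    refine (card_le_card fun i hi => ?_).trans (card_union_le F O)
    simp only [F, O, mem_union, mem_filter] at hi ⊢
    by_cases h : g i < 1 <;> simp_all [not_lt]
  have hdisj : Disjoint F O := disjoint_filter.2 fun i _ h h' => by linarith [h.2]
  have hO : #O + ∑ i ∈ F, g i ≤ ∑ i ∈ s, g i := calc
    (#O : ℝ) + ∑ i ∈ F, g i ≤ ∑ i ∈ O, g i + ∑ i ∈ F, g i := by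
      gcongr
      simpa using card_nsmul_le_sum O g 1 fun i hi => (mem_filter.1 hi).2
    _ = ∑ i ∈ F ∪ O, g i := by rw [sum_union hdisj, add_comm]
    _ ≤ ∑ i ∈ s, g i := sum_le_sum_of_subset_of_nonneg
        (union_subset (filter_subset _ _) (filter_subset _ _)) fun i hi _ => hg i hi
  -- A fractional entry makes `#O < ∑ g`, and integrality then leaves room for `n` more.
  rcases F.eq_empty_or_nonempty with hF | hF
  · have : (#O : ℝ) + n ≤ k + 1 := by simp only [hF, sum_empty] at hO; linarith
    have : #O + n ≤ k + 1 := by exact_mod_cast this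
    simp only [hF, card_empty] at hsupp
    omega
  · have hpos : 0 < ∑ i ∈ F, g i := sum_pos (fun i hi => (mem_filter.1 hi).2.1) hF
    have : (#O : ℝ) + n < k + 1 := by linarith
    have : #O + n < k + 1 := by exact_mod_cast this
    omega

namespace Firefighter

variable {L₁ L₂ : Type*} [Fintype L₁] [Fintype L₂] (p : L₂ → L₁)

def polytope (K₁ K₂ : ℝ) : Set ((L₁ → ℝ) × (L₂ → ℝ)) :=
  {z | (∀ u, 0 ≤ z.1 u) ∧ (∀ v, 0 ≤ z.2 v) ∧ (∀ v, z.1 (p v) + z.2 v ≤ 1) ∧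
    ∑ u, z.1 u ≤ K₁ ∧ ∑ v, z.2 v ≤ K₂}

def coverage (w : L₂ → ℕ) : ((L₁ → ℝ) × (L₂ → ℝ)) →ₗ[ℝ] ℝ where
  toFun z := ∑ v, (w v : ℝ) * (z.1 (p v) + z.2 v)
  map_add' z z' := by
    simp only [Prod.fst_add, Prod.snd_add, Pi.add_apply, ← sum_add_distrib]
    exact sum_congr rfl fun v _ => by ring
  map_smul' c z := by
    simp only [Prod.smul_fst, Prod.smul_snd, Pi.smul_apply, smul_eq_mul, RingHom.id_apply,
      mul_sum]
    exact sum_congr rfl fun v _ => by ring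

theorem isCompact_polytope (K₁ K₂ : ℝ) : IsCompact (polytope p K₁ K₂) := by
  have hclosed : IsClosed (polytope p K₁ K₂) := by
    simp only [polytope, Set.ofPred_and, Set.ofPred_forall]
    refine .inter ?_ (.inter ?_ (.inter ?_ (.inter ?_ ?_))) <;>
      first
        | exact isClosed_iInter fun _ => isClosed_le (by fun_prop) (by fun_prop)
        | exact isClosed_le (by fun_prop) (by fun_prop)
  refine (isCompact_Icc (a := 0) (b := (fun _ => K₁, fun _ => K₂))).of_isClosed_subset
    hclosed ?_
  rintro z ⟨h₁, h₂, -, h₄, h₅⟩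
  refine ⟨⟨h₁, h₂⟩, fun u => ?_, fun v => ?_⟩
  · exact (single_le_sum (fun u _ => h₁ u) (mem_univ u)).trans h₄
  · exact (single_le_sum (fun v _ => h₂ v) (mem_univ v)).trans h₅

structure IsTightDirection (z d : (L₁ → ℝ) × (L₂ → ℝ)) : Prop where
  root : ∀ u, z.1 u = 0 → d.1 u = 0
  leaf : ∀ v, z.2 v = 0 → d.2 v = 0
  cap : ∀ v, z.1 (p v) + z.2 v = 1 → d.1 (p v) + d.2 v = 0
  sum_root : ∑ u, d.1 u = 0
  sum_leaf : ∑ v, d.2 v = 0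

theorem exists_isTightDirection_of_two_lt_card (z : (L₁ → ℝ) × (L₂ → ℝ)) {U : Finset L₁}
    (hU : 2 < #U) (hloose : ∀ u ∈ U, 0 < z.1 u ∧ z.1 u < 1) :
    ∃ d ≠ 0, IsTightDirection p z d := by
  set tight : Finset L₂ := {v | z.1 (p v) + z.2 v = 1}
  -- `μ u` enters the root budget once and the leaf budget once per tight leaf below `u`.
  obtain ⟨μ, hμ, hμU, hrel⟩ := exists_ne_zero_sum_smul_eq_zero (K := ℝ)
    (fun u => ((1 : ℝ), (#{v ∈ tight | p v = u} : ℝ))) U (by simpa using hU)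
  have hsum : ∑ u, μ u = 0 := by
    have := congrArg Prod.fst hrel
    simp only [Prod.fst_sum, Prod.smul_fst, smul_eq_mul, mul_one] at this
    exact this
  have htight : ∑ v ∈ tight, μ (p v) = 0 := by
    have := congrArg Prod.snd hrel
    simp only [Prod.snd_sum, Prod.smul_snd, smul_eq_mul, Prod.snd_zero] at this
    rw [← sum_fiberwise tight p, ← this]
    refine sum_congr rfl fun u _ => ?_
    rw [sum_congr rfl fun v hv => congrArg μ (mem_filter.1 hv).2, sum_const, nsmul_eq_mul,
      mul_comm]
  refine ⟨(μ, fun v => if v ∈ tight then -μ (p v) else 0), fun h => hμ (congrArg Prod.fst h),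
    ⟨fun u hu => hμU u fun hU => (hloose u hU).1.ne' hu, fun v hv => ?_, fun v hv => ?_, hsum,
      ?_⟩⟩
  · dsimp only
    split_ifs with htv
    · rw [hμU (p v) fun hU => ?_, neg_zero]
      linarith [(hloose _ hU).2, (mem_filter.1 htv).2]
    · rfl
  · simp [tight, hv]
  · simp [sum_ite_mem, htight]

theorem exists_isTightDirection_of_one_lt_card (z : (L₁ → ℝ) × (L₂ → ℝ)) {V : Finset L₂}
    (hV : 1 < #V) (hloose : ∀ v ∈ V, 0 < z.2 v ∧ z.1 (p v) + z.2 v < 1) :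
    ∃ d ≠ 0, IsTightDirection p z d := by
  obtain ⟨i, hi, j, hj, hij⟩ := one_lt_card.1 hV
  have hzero : ∀ v, v ≠ i → v ≠ j → (Pi.single i 1 - Pi.single j 1 : L₂ → ℝ) v = 0 := by
    intro v hvi hvj
    simp [hvi, hvj]
  refine ⟨(0, Pi.single i 1 - Pi.single j 1), fun h => ?_, ⟨fun _ _ => rfl, fun v hv => ?_,
    fun v hv => ?_, by simp, by simp [sum_sub_distrib]⟩⟩
  · simpa [hij] using congrFun (congrArg Prod.snd h) i
  · exact hzero v (by rintro rfl; linarith [hloose v hi]) (by rintro rfl; linarith [hloose v hj])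
  · simp only [Pi.zero_apply, zero_add]
    exact hzero v (by rintro rfl; linarith [hloose v hi]) (by rintro rfl; linarith [hloose v hj])

variable {p} {K₁ K₂ : ℝ} {z d : (L₁ → ℝ) × (L₂ → ℝ)}

theorem IsTightDirection.eventually_add_smul_mem (hd : IsTightDirection p z d)
    (hz : z ∈ polytope p K₁ K₂) : ∀ᶠ e in 𝓝 (0 : ℝ), z + e • d ∈ polytope p K₁ K₂ := by
  obtain ⟨h₁, h₂, h₃, h₄, h₅⟩ := hz
  have hroot : ∀ᶠ e in 𝓝 (0 : ℝ), ∀ u, 0 ≤ z.1 u + e * d.1 u :=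
    eventually_all.2 fun u => eventually_nonneg_add_mul (h₁ u) (hd.root u)
  have hleaf : ∀ᶠ e in 𝓝 (0 : ℝ), ∀ v, 0 ≤ z.2 v + e * d.2 v :=
    eventually_all.2 fun v => eventually_nonneg_add_mul (h₂ v) (hd.leaf v)
  have hcap : ∀ᶠ e in 𝓝 (0 : ℝ), ∀ v,
      0 ≤ (1 - (z.1 (p v) + z.2 v)) + e * -(d.1 (p v) + d.2 v) :=
    eventually_all.2 fun v => eventually_nonneg_add_mul (by linarith [h₃ v])
      fun h => by rw [hd.cap v (by linarith), neg_zero]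
  filter_upwards [hroot, hleaf, hcap] with e hr hl hc
  simp only [polytope, Set.mem_ofPred_eq, Prod.fst_add, Prod.snd_add, Prod.smul_fst,
    Prod.smul_snd, Pi.add_apply, Pi.smul_apply, smul_eq_mul, sum_add_distrib, ← mul_sum,
    hd.sum_root, hd.sum_leaf, mul_zero, add_zero]
  exact ⟨hr, hl, fun v => by linarith [hc v], h₄, h₅⟩

theorem IsTightDirection.eq_zero (hd : IsTightDirection p z d) (hz : z ∈ polytope p K₁ K₂)
    (hrigid : ∀ d, z + d ∈ polytope p K₁ K₂ → z - d ∈ polytope p K₁ K₂ → d = 0) : d = 0 := by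
  obtain ⟨ε, hε, hplus, hminus⟩ := (hd.eventually_add_smul_mem hz).exists_pos_and_neg
  rw [neg_smul, ← sub_eq_add_neg] at hminus
  exact (smul_eq_zero.1 (hrigid _ hplus hminus)).resolve_left hε.ne'

theorem card_loose_roots_le_two (hz : z ∈ polytope p K₁ K₂)
    (hrigid : ∀ d, z + d ∈ polytope p K₁ K₂ → z - d ∈ polytope p K₁ K₂ → d = 0) :
    #{u | 0 < z.1 u ∧ z.1 u < 1} ≤ 2 := by
  by_contra! h
  obtain ⟨d, hd0, hd⟩ :=
    exists_isTightDirection_of_two_lt_card p z h fun u hu => (mem_filter.1 hu).2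
  exact hd0 (hd.eq_zero hz hrigid)

theorem card_loose_free_leaves_le_one (hz : z ∈ polytope p K₁ K₂)
    (hrigid : ∀ d, z + d ∈ polytope p K₁ K₂ → z - d ∈ polytope p K₁ K₂ → d = 0) :
    #{v ∈ ({v | z.1 (p v) = 0} : Finset L₂) | 0 < z.2 v ∧ z.2 v < 1} ≤ 1 := by
  by_contra! h
  obtain ⟨d, hd0, hd⟩ := exists_isTightDirection_of_one_lt_card p z h fun v hv => by
    simp only [mem_filter, mem_univ, true_and] at hv
    exact ⟨hv.2.1, by linarith [hv.1, hv.2.2]⟩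
  exact hd0 (hd.eq_zero hz hrigid)

theorem coverage_le_sum_covered (w : L₂ → ℕ) (hz : z ∈ polytope p K₁ K₂) {T₁ : Finset L₁}
    {T₂ : Finset L₂} (hT₁ : ∀ u, 0 < z.1 u → u ∈ T₁)
    (hT₂ : ∀ v, 0 < z.2 v → p v ∉ T₁ → v ∈ T₂) :
    coverage p w z ≤ ∑ v ∈ univ.filter (fun v => v ∈ T₂ ∨ p v ∈ T₁), (w v : ℝ) := by
  obtain ⟨h₁, h₂, h₃, -, -⟩ := hz
  rw [sum_filter]
  refine sum_le_sum fun v _ => ?_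
  have hw : (0 : ℝ) ≤ w v := Nat.cast_nonneg _
  by_cases hp : p v ∈ T₁
  · rw [if_pos (Or.inr hp)]
    nlinarith [h₃ v, h₁ (p v), h₂ v]
  have hroot : z.1 (p v) = 0 := le_antisymm (not_lt.1 fun h => hp (hT₁ _ h)) (h₁ _)
  by_cases hv : 0 < z.2 v
  · rw [if_pos (Or.inl (hT₂ v hv hp))]
    nlinarith [h₃ v]
  · rw [le_antisymm (not_lt.1 hv) (h₂ v), hroot, add_zero, mul_zero]
    positivity

end Firefighter

open Firefighter in
theorem stmt_4 {L₁ L₂ : Type*} [Fintype L₁] [Fintype L₂]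
    (p : L₂ → L₁) (w : L₂ → ℕ) (k₁ k₂ : ℕ) (m : ℝ)
    (y₁ : L₁ → ℝ) (y₂ : L₂ → ℝ)
    (hy₁ : ∀ u, 0 ≤ y₁ u) (hy₂ : ∀ v, 0 ≤ y₂ v)
    (hb₁ : ∑ u, y₁ u ≤ (k₁ : ℝ) - 2)
    (hb₂ : ∑ v, y₂ v ≤ (k₂ : ℝ))
    (hcap : ∀ v, y₁ (p v) + y₂ v ≤ 1)
    (hval : ∑ v, (w v : ℝ) * (y₁ (p v) + y₂ v) ≥ m) :
    ∃ (T₁ : Finset L₁) (T₂ : Finset L₂),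
      T₁.card ≤ k₁ ∧ T₂.card ≤ k₂ ∧
      (m : ℝ) ≤ ∑ v ∈ Finset.univ.filter (fun v => v ∈ T₂ ∨ p v ∈ T₁), (w v : ℝ) := by
  have hy : (y₁, y₂) ∈ polytope p (k₁ - 2) k₂ := ⟨hy₁, hy₂, hcap, hb₁, hb₂⟩
  obtain ⟨z, hz, hzmax, hrigid⟩ :=
    (isCompact_polytope p _ _).exists_isMaxOn_eq_zero_of_add_mem_of_sub_mem ⟨_, hy⟩
      (coverage p w) (LinearMap.continuous_of_finiteDimensional _)
  have ⟨hz₁, hz₂, _, hsum₁, hsum₂⟩ := hz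
  refine ⟨({u | 0 < z.1 u} : Finset L₁), {v ∈ ({v | z.1 (p v) = 0} : Finset L₂) | 0 < z.2 v},
    ?_, ?_, ?_⟩
  · refine card_pos_le_of_card_frac_le (n := 2) (by norm_num) (fun u _ => hz₁ u)
      (card_loose_roots_le_two hz hrigid) ?_
    push_cast
    linarith
  · refine card_pos_le_of_card_frac_le (n := 1) le_rfl (fun v _ => hz₂ v)
      (card_loose_free_leaves_le_one hz hrigid) ?_
    push_cast
    linarith [sum_le_univ_sum_of_nonneg (s := {v | z.1 (p v) = 0}) hz₂]
  · calc m ≤ coverage p w (y₁, y₂) := hval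
      _ ≤ coverage p w z := isMaxOn_iff.1 hzmax _ hy
      _ ≤ _ := coverage_le_sum_covered w hz (by simp) fun v hv hp => by
        simp only [mem_filter, mem_univ, true_and, not_lt] at hp ⊢
        exact ⟨le_antisymm hp (hz₁ _), hv⟩
end

section
/- Let L₁, L₂ be finite disjoint sets with parent map p : L₂ → L₁, weights w : L₂ → ℝ≥0, budget k₂ ∈ ℕ, and a feasible LP point y with ∑_{v∈L₂} y_v ≤ k₂ and 0 ≤ y_v, y_{p(v)} + y_v ≤ 1 for all v ∈ L₂. Let T₁ := { u ∈ L₁ : y_u > 0 }, U := { v ∈ L₂ : p(v) ∉ T₁ }, and let T₂ be a set of min(k₂,|U|) elements of U of largest weight. Then ∑_{v ∈ T₂} w(v) + ∑_{v ∈ L₂ \ U} w(v) ≥ ∑_{v ∈ L₂} w(v)·(y_{p(v)} + y_v). -/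
open scoped Classical

open Finset

section Greedy

variable {ι : Type*} {s t : Finset ι} {w x : ι → ℝ}

/-- Exchange argument: mass `x` on `s \ t` is worth at most `c` per unit, while each unit of
slack `1 - x` on `t` is worth at least `c`, and there is no less slack than mass. -/
theorem sum_mul_le_sum_of_threshold (hts : t ⊆ s) {c : ℝ} (hc : 0 ≤ c)
    (hwt : ∀ i ∈ t, c ≤ w i) (hws : ∀ i ∈ s \ t, w i ≤ c)
    (hx₀ : ∀ i ∈ s, 0 ≤ x i) (hx₁ : ∀ i ∈ t, x i ≤ 1) (hsum : ∑ i ∈ s, x i ≤ #t) :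
    ∑ i ∈ s, w i * x i ≤ ∑ i ∈ t, w i := by
  have hout : ∑ i ∈ s \ t, w i * x i ≤ ∑ i ∈ s \ t, c * x i :=
    sum_le_sum fun i hi => mul_le_mul_of_nonneg_right (hws i hi) (hx₀ i (sdiff_subset hi))
  have hin : ∑ i ∈ t, (w i * x i + c * (1 - x i)) ≤ ∑ i ∈ t, w i :=
    sum_le_sum fun i hi => by nlinarith [hwt i hi, hx₁ i hi]
  have hslack : 0 ≤ c * (#t - ∑ i ∈ s, x i) := mul_nonneg hc (sub_nonneg.2 hsum)
  rw [← sum_sdiff hts] at hslack ⊢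
  simp only [sum_add_distrib, mul_sub, mul_one, sum_sub_distrib, sum_const, nsmul_eq_mul,
    ← mul_sum] at hout hin hslack
  linarith

theorem exists_threshold (hw : ∀ i ∈ s, 0 ≤ w i) (hts : t ⊆ s)
    (htop : ∀ i ∈ t, ∀ j ∈ s \ t, w j ≤ w i) :
    ∃ c, 0 ≤ c ∧ (∀ i ∈ t, c ≤ w i) ∧ ∀ i ∈ s \ t, w i ≤ c := by
  rcases t.eq_empty_or_nonempty with rfl | ht
  · exact ⟨∑ i ∈ s, w i, sum_nonneg hw, by simp,
      fun i hi => single_le_sum hw (sdiff_subset hi)⟩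
  · obtain ⟨i₀, hi₀, hmin⟩ := t.exists_min_image w ht
    exact ⟨w i₀, hw i₀ (hts hi₀), hmin, fun j hj => htop i₀ hi₀ j hj⟩

theorem sum_mul_le_sum_of_heaviest (k : ℕ) (hw : ∀ i ∈ s, 0 ≤ w i)
    (hx₀ : ∀ i ∈ s, 0 ≤ x i) (hx₁ : ∀ i ∈ s, x i ≤ 1) (hk : ∑ i ∈ s, x i ≤ k)
    (hts : t ⊆ s) (hcard : #t = min k #s) (htop : ∀ i ∈ t, ∀ j ∈ s \ t, w j ≤ w i) :
    ∑ i ∈ s, w i * x i ≤ ∑ i ∈ t, w i := by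
  obtain ⟨c, hc, hwt, hws⟩ := exists_threshold hw hts htop
  have hs : ∑ i ∈ s, x i ≤ #s := by
    simpa using sum_le_sum hx₁
  refine sum_mul_le_sum_of_threshold hts hc hwt hws hx₀ (fun i hi => hx₁ i (hts hi)) ?_
  rw [hcard, Nat.cast_min]
  exact le_min hk hs

end Greedy

theorem stmt_6 {L₁ L₂ : Type*} [Fintype L₁] [Fintype L₂]
    (p : L₂ → L₁) (w : L₂ → ℝ) (hw : ∀ v, 0 ≤ w v) (k₂ : ℕ)
    (y₁ : L₁ → ℝ) (y₂ : L₂ → ℝ)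
    (hy₂ : ∀ v, 0 ≤ y₂ v) (hy₁ : ∀ u, 0 ≤ y₁ u)
    (hb₂ : ∑ v, y₂ v ≤ (k₂ : ℝ))
    (hcap : ∀ v, y₁ (p v) + y₂ v ≤ 1)
    (T₁ : Finset L₁) (hT₁ : T₁ = Finset.univ.filter (fun u => 0 < y₁ u))
    (U : Finset L₂) (hU : U = Finset.univ.filter (fun v => p v ∉ T₁))
    (T₂ : Finset L₂) (hT₂U : T₂ ⊆ U) (hT₂card : T₂.card = min k₂ U.card)
    (hT₂top : ∀ v ∈ T₂, ∀ v' ∈ U \ T₂, w v' ≤ w v) :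
    ∑ v, w v * (y₁ (p v) + y₂ v) ≤ ∑ v ∈ T₂, w v + ∑ v ∈ Finset.univ \ U, w v := by
  have hy₁U : ∀ v ∈ U, y₁ (p v) = 0 := fun v hv => by
    subst hU hT₁
    simp only [mem_filter, mem_univ, true_and, not_lt] at hv
    exact le_antisymm hv (hy₁ _)
  have hy₂_le_one : ∀ v, y₂ v ≤ 1 := fun v => by linarith [hcap v, hy₁ (p v)]
  have hkU : ∑ v ∈ U, y₂ v ≤ k₂ :=
    (sum_le_sum_of_subset_of_nonneg (subset_univ U) fun v _ _ => hy₂ v).trans hb₂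
  calc ∑ v, w v * (y₁ (p v) + y₂ v)
      = ∑ v ∈ U, w v * y₂ v + ∑ v ∈ univ \ U, w v * (y₁ (p v) + y₂ v) := by
        rw [← sum_sdiff (subset_univ U), add_comm]
        congr 1
        exact sum_congr rfl fun v hv => by rw [hy₁U v hv, zero_add]
    _ ≤ ∑ v ∈ T₂, w v + ∑ v ∈ univ \ U, w v := by
        gcongr ?_ + ?_
        · exact sum_mul_le_sum_of_heaviest k₂ (fun v _ => hw v) (fun v _ => hy₂ v)
            (fun v _ => hy₂_le_one v) hkU hT₂U hT₂card hT₂top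
        · exact sum_le_sum fun v _ => mul_le_of_le_one_right (hw v) (hcap v)
end

section
/- Let (X,d) be a finite metric space, r₁ > 0, Y ⊆ X with pairwise distances > 8r₁, and an integral solution (S₁,S₂) with |S₁| ≤ k₁, covering (with radii r₁ and r₂) at least m points of X. Write A := { f ∈ S₁ : d(f,Y) ≤ r₁ } and suppose |A| = |S₁| (i.e., B := S₁ \ A is empty). Define S'₁ := { y ∈ Y : d(y,A) ≤ r₁ }. Then |S'₁| ≤ k₁ and the solution (S'₁, S₂) with radii (2r₁, r₂) covers every point covered by (S₁,S₂) with radii (r₁,r₂); in particular it covers at least m points. -/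
open scoped Classical

/-! Each centre `f ∈ S₁` lies within `r₁` of some `y ∈ Y`, so replacing `f` by `y` costs at most
`r₁` extra radius by the triangle inequality. Two points of `Y` within `r₁` of the same centre are
at most `2 r₁` apart, hence equal by the separation of `Y`; so `S'₁` has at most `|S₁|` points. -/

section

variable {X : Type*} [MetricSpace X]

theorem Finset.card_filter_exists_dist_le_le_card {Y S : Finset X} {r : ℝ}
    (hsep : ∀ y ∈ Y, ∀ y' ∈ Y, y ≠ y' → 2 * r < dist y y') :
    (Y.filter fun y => ∃ f ∈ S, dist y f ≤ r).card ≤ S.card := by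
  refine Finset.card_le_card_of_forall_subsingleton (fun y f => dist y f ≤ r)
    (fun y hy => (Finset.mem_filter.mp hy).2) fun f _ y hy y' hy' => ?_
  obtain ⟨hyY, hyf⟩ := hy
  obtain ⟨hy'Y, hy'f⟩ := hy'
  by_contra hne
  have : dist y y' ≤ 2 * r := by
    calc dist y y' ≤ dist y f + dist y' f := dist_triangle_right y y' f
      _ ≤ 2 * r := by linarith
  exact (hsep y (Finset.mem_filter.mp hyY).1 y' (Finset.mem_filter.mp hy'Y).1 hne).not_ge this

theorem exists_mem_filter_dist_le_add {Y S : Finset X} {r ρ : ℝ}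
    (hS : ∀ f ∈ S, ∃ y ∈ Y, dist f y ≤ r) {x : X} (hx : ∃ f ∈ S, dist x f ≤ ρ) :
    ∃ y ∈ Y.filter (fun y => ∃ f ∈ S, dist y f ≤ r), dist x y ≤ ρ + r := by
  obtain ⟨f, hf, hxf⟩ := hx
  obtain ⟨y, hy, hfy⟩ := hS f hf
  refine ⟨y, Finset.mem_filter.mpr ⟨hy, f, hf, by rwa [dist_comm]⟩, ?_⟩
  calc dist x y ≤ dist x f + dist f y := dist_triangle x f y
    _ ≤ ρ + r := add_le_add hxf hfy

end

theorem stmt_15_general {X : Type*} [MetricSpace X] [Fintype X]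
    (r₁ r₂ : ℝ) (hr₁ : 0 < r₁)
    (k₁ : ℕ) (m : ℕ)
    (Y : Finset X) (hsep : ∀ y ∈ Y, ∀ y' ∈ Y, y ≠ y' → dist y y' > 8 * r₁)
    (S₁ S₂ : Finset X) (hS₁ : S₁.card ≤ k₁)
    (hA : ∀ f ∈ S₁, ∃ y ∈ Y, dist f y ≤ r₁)
    (hm : m ≤ (Finset.univ.filter (fun x : X =>
        (∃ s ∈ S₁, dist x s ≤ r₁) ∨ (∃ s ∈ S₂, dist x s ≤ r₂))).card)
    (S'₁ : Finset X) (hS'₁ : S'₁ = Y.filter (fun y => ∃ f ∈ S₁, dist y f ≤ r₁)) :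
    S'₁.card ≤ k₁ ∧
    (∀ x : X, ((∃ s ∈ S₁, dist x s ≤ r₁) ∨ (∃ s ∈ S₂, dist x s ≤ r₂)) →
        ((∃ y ∈ S'₁, dist x y ≤ 2 * r₁) ∨ (∃ s ∈ S₂, dist x s ≤ r₂))) ∧
    m ≤ (Finset.univ.filter (fun x : X =>
        (∃ y ∈ S'₁, dist x y ≤ 2 * r₁) ∨ (∃ s ∈ S₂, dist x s ≤ r₂))).card := by
  subst hS'₁
  have hsep' : ∀ y ∈ Y, ∀ y' ∈ Y, y ≠ y' → 2 * r₁ < dist y y' := fun y hy y' hy' hne => by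
    linarith [hsep y hy y' hy' hne]
  have hcov : ∀ x : X, ((∃ s ∈ S₁, dist x s ≤ r₁) ∨ (∃ s ∈ S₂, dist x s ≤ r₂)) →
      ((∃ y ∈ Y.filter (fun y => ∃ f ∈ S₁, dist y f ≤ r₁), dist x y ≤ 2 * r₁) ∨
        (∃ s ∈ S₂, dist x s ≤ r₂)) := by
    rintro x (hx | hx)
    · exact Or.inl (two_mul r₁ ▸ exists_mem_filter_dist_le_add hA hx)
    · exact Or.inr hx
  refine ⟨(Finset.card_filter_exists_dist_le_le_card hsep').trans hS₁, hcov,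
    hm.trans (Finset.card_le_card (Finset.monotone_filter_right _ fun x _ => hcov x))⟩

theorem stmt_15 {X : Type*} [MetricSpace X] [Fintype X]
    (r₁ r₂ : ℝ) (hr₁ : 0 < r₁) (hr₂ : 0 ≤ r₂)
    (k₁ : ℕ) (m : ℕ)
    (Y : Finset X) (hsep : ∀ y ∈ Y, ∀ y' ∈ Y, y ≠ y' → dist y y' > 8 * r₁)
    (S₁ S₂ : Finset X) (hS₁ : S₁.card ≤ k₁)
    (hA : ∀ f ∈ S₁, ∃ y ∈ Y, dist f y ≤ r₁)
    (hm : m ≤ (Finset.univ.filter (fun x : X =>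
        (∃ s ∈ S₁, dist x s ≤ r₁) ∨ (∃ s ∈ S₂, dist x s ≤ r₂))).card)
    (S'₁ : Finset X) (hS'₁ : S'₁ = Y.filter (fun y => ∃ f ∈ S₁, dist y f ≤ r₁)) :
    S'₁.card ≤ k₁ ∧
    (∀ x : X, ((∃ s ∈ S₁, dist x s ≤ r₁) ∨ (∃ s ∈ S₂, dist x s ≤ r₂)) →
        ((∃ y ∈ S'₁, dist x y ≤ 2 * r₁) ∨ (∃ s ∈ S₂, dist x s ≤ r₂))) ∧
    m ≤ (Finset.univ.filter (fun x : X =>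
        (∃ y ∈ S'₁, dist x y ≤ 2 * r₁) ∨ (∃ s ∈ S₂, dist x s ≤ r₂))).card :=
  stmt_15_general r₁ r₂ hr₁ k₁ m Y hsep S₁ S₂ hS₁ hA hm S'₁ hS'₁
end
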